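/- arXiv:1406.7860 — 2 statements merged into one kernel-verified Lean document; each statement's English description precedes it below -/
import Mathlib

section
/- Let n ≥ 2 and let T be a 0-1 word of length n−1. Then the function β defined on 0-1 words E of length n−1 by β_E = h_{E,T} satisfies the dual Bayer–Billera relations (this expresses that the quasisymmetric function D_T = Σ_{E ∈ G(T)} sgn(E,T) L_E lies in the peak algebra). -/
/-- `S(T)`: the set of (1-indexed) positions of the 1's of the word `T`. -/
def onesSet (T : List Bool) : Finset ℕ :=
  ((Finset.range T.length).filter (fun i => T.getD i false = true)).image (· + 1)

/-- The increasing list `s_1 < ⋯ < s_t` of positions of the 1's of `T`. -/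
def sListOf (T : List Bool) : List ℕ := (onesSet T).sort (· ≤ ·)

/-- `sfun n T j = s_j`, with the conventions `s_0 = 0` and `s_j = n` for `j > t`. -/
def sfun (n : ℕ) (T : List Bool) (j : ℕ) : ℕ :=
  if j = 0 then 0 else (sListOf T).getD (j - 1) n

/-- `tOf T = t`, the number of 1's of `T`. -/
def tOf (T : List Bool) : ℕ := (onesSet T).card

/-- `S ∩ (s_j, s_{j+1})`, the elements of `S` lying strictly between `s_j` and `s_{j+1}`. -/
def intv (n : ℕ) (T : List Bool) (S : Finset ℕ) (j : ℕ) : Finset ℕ :=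
  S.filter (fun x => sfun n T j < x ∧ x < sfun n T (j + 1))

/-- `S ∈ G(T)`: every interval `(s_j, s_{j+1})` with `0 ≤ j ≤ t-1` meets `S`, and any two
elements of `S` in a common interval `(s_j, s_{j+1})`, `0 ≤ j ≤ t`, are congruent mod 2. -/
def memG (n : ℕ) (T : List Bool) (S : Finset ℕ) : Prop :=
  (∀ j < tOf T, (intv n T S j).Nonempty) ∧
    (∀ j ≤ tOf T, ∀ x ∈ intv n T S j, ∀ y ∈ intv n T S j, x % 2 = y % 2)

/-- `sgn(S,T) = (-1)^(Σ_{j=0}^{t-1} (s_{j+1} - y_j - 1))`, with `y_j` the least element of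
`S ∩ (s_j, s_{j+1})` (any choice gives the same value when `S ∈ G(T)`). -/
noncomputable def sgnST (n : ℕ) (T : List Bool) (S : Finset ℕ) : ℚ :=
  (-1 : ℚ) ^ (∑ j ∈ Finset.range (tOf T),
    (sfun n T (j + 1) - WithTop.untopD 0 (intv n T S j).min - 1))

/-- `h_{S,T}`. -/
noncomputable def hST (n : ℕ) (T : List Bool) (S : Finset ℕ) : ℚ :=
  haveI := Classical.propDecidable (memG n T S)
  if memG n T S then sgnST n T S else 0

/-- `∂(E) = {i ∈ [m-1] : E_i ≠ E_{i+1}} ∪ {m}` for a word `E` of length `m` (1-indexed). -/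
def bnd (E : List Bool) : Finset ℕ :=
  ((Finset.Icc 1 (E.length - 1)).filter
      (fun i => E.getD (i - 1) false ≠ E.getD i false)) ∪ {E.length}

/-- A word is sparse if it does not begin with a 1 and has no two consecutive 1's. -/
def Sparse (E : List Bool) : Prop :=
  E.head? ≠ some true ∧ E.Chain' (fun a b => ¬(a = true ∧ b = true))


/-- `chk E` is the word `E` with its last letter flipped (`chk [] = []`). -/
def chk : List Bool → List Bool
  | [] => []
  | [b] => [!b]
  | b :: c :: rest => b :: chk (c :: rest)

/-- `comp E` is the complementary word, with every letter flipped. -/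
def comp (E : List Bool) : List Bool := E.map (!·)

/-- `β` satisfies the dual Bayer–Billera relations (for words of length `m`). -/
def DualBB (m : ℕ) (β : List Bool → ℚ) : Prop :=
  ∀ E F : List Bool, E.length + F.length = m →
    β (E ++ F) + β (chk E ++ F) = β (E ++ comp F) + β (chk E ++ comp F)

/-!
`h_{S,T}` is a product over the intervals `(s_j, s_{j+1})` of local factors, each depending only
on `S ∩ (s_j, s_{j+1})`. Write `E = E'e` with `k = |E'| ≥ 1` and `F ≠ ε`. Complementing a suffix
of a word toggles exactly one point of `∂`, so the four words of a dual Bayer–Billera relation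
have boundary sets `S`, `S ∆ {k, k+1}`, `S ∆ {k+1}`, `S ∆ {k}` with `S = ∂(EF)`, and the relation
becomes `h(S) + h(S ∆ {k, k+1}) = h(S ∆ {k+1}) + h(S ∆ {k})`. A point `s_i` lies in no interval,
so toggling it changes nothing; otherwise `k` and `k+1` lie in the same interval and only its
factor moves. There a set containing both `k` and `k+1` fails the parity condition, exactly one
of `k`, `k+1` has the parity of the points already present (with the same sign), and when no
point is present the two singletons carry opposite signs. For `|E| ≤ 1` the relation follows
from `∂(Ē) = ∂(E)`.
-/

open Finset

section Breakpoints

variable {n : ℕ} {T : List Bool}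

lemma le_length_of_mem_onesSet {x : ℕ} (h : x ∈ onesSet T) : x ≤ T.length := by
  simp only [onesSet, mem_image, mem_filter, mem_range] at h
  obtain ⟨i, ⟨hi, _⟩, rfl⟩ := h
  omega

lemma length_sListOf (T : List Bool) : (sListOf T).length = tOf T :=
  length_sort _

lemma sfun_succ_of_lt {j : ℕ} (h : j < tOf T) :
    sfun n T (j + 1) = (sListOf T)[j]'(by rw [length_sListOf]; exact h) := by
  rw [sfun, if_neg (Nat.succ_ne_zero j), Nat.add_sub_cancel]
  exact List.getD_eq_getElem _ _ _

lemma sfun_of_tOf_lt {j : ℕ} (h : tOf T < j) : sfun n T j = n := by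
  rw [sfun, if_neg (by omega)]
  exact List.getD_eq_default _ _ (by rw [length_sListOf]; omega)

lemma sfun_succ_mem_onesSet {j : ℕ} (h : j < tOf T) : sfun n T (j + 1) ∈ onesSet T := by
  rw [sfun_succ_of_lt h]
  exact (mem_sort _).1 (List.getElem_mem _)

lemma sfun_monotone (hT : T.length < n) : Monotone (sfun n T) := by
  refine monotone_nat_of_le_succ fun j => ?_
  rcases j with _ | j
  · simp [sfun]
  rcases lt_trichotomy (j + 1) (tOf T) with h | h | h
  · rw [sfun_succ_of_lt (by omega), sfun_succ_of_lt h]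
    exact ((sortedLT_sort _).getElem_lt_getElem_of_lt (Nat.lt_succ_self j)).le
  · have := le_length_of_mem_onesSet (sfun_succ_mem_onesSet (n := n) (by omega : j < tOf T))
    rw [sfun_of_tOf_lt (by omega : tOf T < j + 1 + 1)]
    omega
  · rw [sfun_of_tOf_lt h, sfun_of_tOf_lt (by omega)]

lemma exists_sfun_lt_lt {x : ℕ} (hx₀ : 0 < x) (hxn : x < n)
    (hx : x ∉ onesSet T) : ∃ j ≤ tOf T, sfun n T j < x ∧ x < sfun n T (j + 1) := by
  have hex : ∃ j, x < sfun n T (j + 1) := ⟨tOf T, by rwa [sfun_of_tOf_lt (by omega)]⟩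
  have hspec := Nat.find_spec hex
  have hmin : ∀ i < Nat.find hex, sfun n T (i + 1) ≤ x := fun i hi => not_lt.1 (Nat.find_min hex hi)
  have hle : Nat.find hex ≤ tOf T := Nat.find_min' hex (by rwa [sfun_of_tOf_lt (by omega)])
  refine ⟨_, hle, ?_, hspec⟩
  generalize Nat.find hex = j at hspec hmin hle ⊢
  rcases j with _ | j
  · simpa [sfun] using hx₀
  · exact lt_of_le_of_ne (hmin j j.lt_succ_self) fun heq => hx (heq ▸ sfun_succ_mem_onesSet hle)

lemma eq_of_sfun_lt_lt (hT : T.length < n) {i j x y : ℕ}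
    (hi : sfun n T i < x) (hi' : x < sfun n T (i + 1))
    (hj : sfun n T j < y) (hj' : y < sfun n T (j + 1)) (hxy : x ≤ y) (hyx : y ≤ x + 1) :
    i = j := by
  rcases lt_trichotomy i j with h | h | h
  · have := sfun_monotone hT (show i + 1 ≤ j by omega)
    omega
  · exact h
  · have := sfun_monotone hT (show j + 1 ≤ i by omega)
    omega

lemma not_sfun_lt_lt_of_mem_onesSet (hT : T.length < n) {x : ℕ} (hx : x ∈ onesSet T) (j : ℕ) :
    ¬ (sfun n T j < x ∧ x < sfun n T (j + 1)) := by
  have hx' : x ∈ sListOf T := (mem_sort _).2 hx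
  obtain ⟨i, hi, hix⟩ := List.getElem_of_mem hx'
  rw [length_sListOf] at hi
  rw [← hix, ← sfun_succ_of_lt hi]
  rintro ⟨h₁, h₂⟩
  have := (sfun_monotone hT).reflect_lt h₁
  have := (sfun_monotone hT).reflect_lt h₂
  omega

end Breakpoints

section Intervals

variable {n : ℕ} {T : List Bool} {S : Finset ℕ} {j x : ℕ}

lemma lt_of_mem_intv (hx : x ∈ intv n T S j) : x < sfun n T (j + 1) :=
  (mem_filter.1 hx).2.2

lemma intv_insert_of_sfun_lt_lt (h : sfun n T j < x ∧ x < sfun n T (j + 1)) :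
    intv n T (insert x S) j = insert x (intv n T S j) := by
  rw [intv, filter_insert, if_pos h, intv]

lemma intv_insert_of_not_sfun_lt_lt (h : ¬ (sfun n T j < x ∧ x < sfun n T (j + 1))) :
    intv n T (insert x S) j = intv n T S j := by
  rw [intv, filter_insert, if_neg h, intv]

end Intervals

def SameParity (I : Finset ℕ) : Prop := ∀ x ∈ I, ∀ y ∈ I, x % 2 = y % 2

section SameParity

variable {I J : Finset ℕ} {r x : ℕ}

lemma SameParity.mono (hIJ : I ⊆ J) (hJ : SameParity J) : SameParity I :=
  fun x hx y hy => hJ x (hIJ hx) y (hIJ hy)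

lemma sameParity_singleton (x : ℕ) : SameParity {x} := by
  simp [SameParity]

lemma sameParity_insert_iff (hr : r ∈ I) (hx : x % 2 = r % 2) :
    SameParity (insert x I) ↔ SameParity I := by
  refine ⟨SameParity.mono (subset_insert x I), fun hI => ?_⟩
  have key : ∀ z ∈ insert x I, z % 2 = r % 2 := by
    intro z hz
    rcases mem_insert.1 hz with rfl | hz
    exacts [hx, hI z hz r hr]
  exact fun a ha b hb => (key a ha).trans (key b hb).symm

lemma not_sameParity_insert (hr : r ∈ I) (hx : x % 2 ≠ r % 2) : ¬ SameParity (insert x I) :=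
  fun h => hx (h x (mem_insert_self x I) r (mem_insert_of_mem hr))

end SameParity

open Classical in
/-- The factor of `hST` contributed by one interval `(s_j, s_{j+1})`: here `s = s_{j+1}` and
`inner` says `j < t`, i.e. that the interval is required to meet `S` and contributes a sign. -/
noncomputable def intervalWeight (s : ℕ) (inner : Prop) (I : Finset ℕ) : ℚ :=
  if (inner → I.Nonempty) ∧ SameParity I then
    if inner then (-1) ^ (s - WithTop.untopD 0 I.min - 1) else 1
  else 0

section IntervalWeight

variable {s : ℕ} {inner : Prop} {I A : Finset ℕ} {p r x : ℕ}

lemma intervalWeight_of_not_sameParity (h : ¬ SameParity I) : intervalWeight s inner I = 0 :=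
  if_neg fun h' => h h'.2

lemma intervalWeight_of_not_inner (h : ¬ inner) (hI : SameParity I) :
    intervalWeight s inner I = 1 := by
  rw [intervalWeight, if_pos ⟨fun h' => absurd h' h, hI⟩, if_neg h]

lemma intervalWeight_of_mem (h : inner) (hI : SameParity I) (hlt : ∀ x ∈ I, x < s)
    (hy : y ∈ I) : intervalWeight s inner I = (-1) ^ (s - y - 1) := by
  obtain ⟨m, hm⟩ := min_of_nonempty ⟨y, hy⟩
  have hmI := mem_of_min hm
  rw [intervalWeight, if_pos ⟨fun _ => ⟨y, hy⟩, hI⟩, if_pos h, hm, WithTop.untopD_coe,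
    neg_one_pow_eq_pow_mod_two, neg_one_pow_eq_pow_mod_two (s - y - 1)]
  have := hI m hmI y hy
  have := hlt m hmI
  have := hlt y hy
  congr 1
  omega

lemma intervalWeight_empty (h : inner) : intervalWeight s inner ∅ = 0 :=
  if_neg fun h' => Finset.not_nonempty_empty (h'.1 h)

lemma intervalWeight_insert_of_mod_eq (hA : ∀ x ∈ A, x < s) (hx : x < s) (hr : r ∈ A)
    (hxr : x % 2 = r % 2) : intervalWeight s inner (insert x A) = intervalWeight s inner A := by
  by_cases hpar : SameParity A
  · have hpar' := (sameParity_insert_iff hr hxr).2 hpar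
    by_cases h : inner
    · rw [intervalWeight_of_mem h hpar' (by simpa [hx] using hA) (mem_insert_of_mem hr),
        intervalWeight_of_mem h hpar hA hr]
    · rw [intervalWeight_of_not_inner h hpar', intervalWeight_of_not_inner h hpar]
  · rw [intervalWeight_of_not_sameParity hpar,
      intervalWeight_of_not_sameParity (mt (sameParity_insert_iff hr hxr).1 hpar)]

lemma intervalWeight_insert_insert_add (hA : ∀ x ∈ A, x < s) (hp : p + 1 < s)
    (hne : inner ∨ A.Nonempty) :
    intervalWeight s inner (insert p (insert (p + 1) A)) + intervalWeight s inner A =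
      intervalWeight s inner (insert p A) + intervalWeight s inner (insert (p + 1) A) := by
  have hpq : intervalWeight s inner (insert p (insert (p + 1) A)) = 0 :=
    intervalWeight_of_not_sameParity
      (not_sameParity_insert (mem_insert_self _ _) (by omega))
  rw [hpq, zero_add]
  rcases A.eq_empty_or_nonempty with rfl | ⟨r, hr⟩
  · have h : inner := hne.resolve_right Finset.not_nonempty_empty
    rw [intervalWeight_empty h, insert_empty, insert_empty,
      intervalWeight_of_mem h (sameParity_singleton p) (by simp; omega) (mem_singleton_self p),
      intervalWeight_of_mem h (sameParity_singleton _) (by simp; omega) (mem_singleton_self _),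
      show s - p - 1 = s - (p + 1) - 1 + 1 by omega, pow_succ]
    ring
  by_cases hpr : p % 2 = r % 2
  · rw [intervalWeight_insert_of_mod_eq hA (by omega) hr hpr,
      intervalWeight_of_not_sameParity (not_sameParity_insert hr (by omega)), add_zero]
  · rw [intervalWeight_insert_of_mod_eq hA hp hr (by omega),
      intervalWeight_of_not_sameParity (not_sameParity_insert hr hpr), zero_add]

end IntervalWeight

section Factorization

variable {n : ℕ} {T : List Bool}

lemma hST_eq_prod (S : Finset ℕ) :
    hST n T S = ∏ j ∈ range (tOf T + 1),
      intervalWeight (sfun n T (j + 1)) (j < tOf T) (intv n T S j) := by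
  by_cases hG : memG n T S
  · rw [hST, if_pos hG, sgnST, ← prod_pow_eq_pow_sum, prod_range_succ,
      intervalWeight_of_not_inner (lt_irrefl _) (hG.2 _ le_rfl), mul_one]
    refine prod_congr rfl fun j hj => ?_
    rw [mem_range] at hj
    rw [intervalWeight, if_pos ⟨fun _ => hG.1 j hj, hG.2 j hj.le⟩, if_pos hj]
  · rw [hST, if_neg hG]
    simp only [memG, not_and_or, not_forall] at hG
    rcases hG with ⟨j, hj, hne⟩ | ⟨j, hj, x, hx, y, hy, hxy⟩
    · exact (prod_eq_zero (i := j) (mem_range.2 (by omega))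
        (if_neg fun h => hne (h.1 hj))).symm
    · exact (prod_eq_zero (i := j) (mem_range.2 (by omega))
        (intervalWeight_of_not_sameParity fun h => hxy (h x hx y hy))).symm

lemma hST_insert_of_mem_onesSet (hT : T.length < n) {S : Finset ℕ} {x : ℕ}
    (hx : x ∈ onesSet T) : hST n T (insert x S) = hST n T S := by
  simp only [hST_eq_prod,
    intv_insert_of_not_sfun_lt_lt (not_sfun_lt_lt_of_mem_onesSet hT hx _)]

lemma hST_eq_mul_of_intv_eq {X S : Finset ℕ} {j₀ : ℕ} (hj₀ : j₀ ≤ tOf T)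
    (h : ∀ j ≠ j₀, intv n T X j = intv n T S j) :
    hST n T X = intervalWeight (sfun n T (j₀ + 1)) (j₀ < tOf T) (intv n T X j₀) *
      ∏ j ∈ (range (tOf T + 1)).erase j₀,
        intervalWeight (sfun n T (j + 1)) (j < tOf T) (intv n T S j) := by
  rw [hST_eq_prod, ← mul_prod_erase _ _ (mem_range.2 (Nat.lt_succ_of_le hj₀))]
  exact congrArg _ (prod_congr rfl fun j hj => by rw [h j (ne_of_mem_erase hj)])

end Factorization

/-- The point `n - 1 ∈ S` keeps the last interval nonempty, as the local identity requires. -/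
theorem hST_insert_insert_add {n : ℕ} {T : List Bool} (hT : T.length < n) {S : Finset ℕ}
    (hS : n - 1 ∈ S) {p : ℕ} (hp : 1 ≤ p) (hpn : p + 2 < n) :
    hST n T (insert p (insert (p + 1) S)) + hST n T S =
      hST n T (insert p S) + hST n T (insert (p + 1) S) := by
  by_cases hpo : p ∈ onesSet T
  · rw [hST_insert_of_mem_onesSet hT hpo, hST_insert_of_mem_onesSet hT hpo, add_comm]
  by_cases hqo : p + 1 ∈ onesSet T
  · rw [insert_comm, hST_insert_of_mem_onesSet hT hqo, hST_insert_of_mem_onesSet hT hqo]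
  obtain ⟨j₀, hj₀, hp₁, hp₂⟩ := exists_sfun_lt_lt (n := n) (x := p) (by omega) (by omega) hpo
  obtain ⟨j₁, -, hq₁, hq₂⟩ := exists_sfun_lt_lt (n := n) (x := p + 1) (by omega) (by omega) hqo
  obtain rfl : j₀ = j₁ := eq_of_sfun_lt_lt hT hp₁ hp₂ hq₁ hq₂ (by omega) le_rfl
  have hother : ∀ {x}, sfun n T j₀ < x → x < sfun n T (j₀ + 1) →
      ∀ R, ∀ j ≠ j₀, intv n T (insert x R) j = intv n T R j :=
    fun hx₁ hx₂ R j hj => intv_insert_of_not_sfun_lt_lt fun h =>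
      hj (eq_of_sfun_lt_lt hT h.1 h.2 hx₁ hx₂ le_rfl (by omega))
  have hne : j₀ < tOf T ∨ (intv n T S j₀).Nonempty := by
    refine or_iff_not_imp_left.2 fun h => ⟨n - 1, mem_filter.2 ⟨hS, by omega, ?_⟩⟩
    rw [sfun_of_tOf_lt (by omega)]
    omega
  rw [hST_eq_mul_of_intv_eq hj₀ (S := S) fun j hj => by
      rw [hother hp₁ hp₂ _ j hj, hother hq₁ hq₂ _ j hj],
    hST_eq_mul_of_intv_eq hj₀ (S := S) fun _ _ => rfl,
    hST_eq_mul_of_intv_eq hj₀ (S := S) (hother hp₁ hp₂ S),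
    hST_eq_mul_of_intv_eq hj₀ (S := S) (hother hq₁ hq₂ S),
    intv_insert_of_sfun_lt_lt ⟨hp₁, hp₂⟩, intv_insert_of_sfun_lt_lt ⟨hq₁, hq₂⟩,
    intv_insert_of_sfun_lt_lt ⟨hp₁, hp₂⟩, ← add_mul, ← add_mul,
    intervalWeight_insert_insert_add (fun _ => lt_of_mem_intv) hq₂ hne]

theorem add_apply_symmDiff_symmDiff {α M : Type*} [DecidableEq α] [AddCommMonoid M]
    {g : Finset α → M} {a b : α} (hab : a ≠ b) (S : Finset α)
    (h : g (insert a (insert b (S \ {a, b}))) + g (S \ {a, b}) =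
      g (insert a (S \ {a, b})) + g (insert b (S \ {a, b}))) :
    g S + g (symmDiff (symmDiff S {a}) {b}) = g (symmDiff S {a}) + g (symmDiff S {b}) := by
  obtain ⟨R, hR⟩ : ∃ R, S \ {a, b} = R := ⟨_, rfl⟩
  rw [hR] at h
  by_cases ha : a ∈ S <;> by_cases hb : b ∈ S
  · rw [show symmDiff (symmDiff S {a}) {b} = R by grind [mem_symmDiff],
      show symmDiff S {a} = insert b R by grind [mem_symmDiff],
      show symmDiff S {b} = insert a R by grind [mem_symmDiff],
      show S = insert a (insert b R) by grind, add_comm (g (insert b R)), h]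
  · rw [show symmDiff (symmDiff S {a}) {b} = insert b R by grind [mem_symmDiff],
      show symmDiff S {a} = R by grind [mem_symmDiff],
      show symmDiff S {b} = insert a (insert b R) by grind [mem_symmDiff],
      show S = insert a R by grind, add_comm (g R), h, add_comm]
  · rw [show symmDiff (symmDiff S {a}) {b} = insert a R by grind [mem_symmDiff],
      show symmDiff S {a} = insert a (insert b R) by grind [mem_symmDiff],
      show symmDiff S {b} = R by grind [mem_symmDiff],
      show S = insert b R by grind, h, add_comm]
  · rw [show symmDiff (symmDiff S {a}) {b} = insert a (insert b R) by grind [mem_symmDiff],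
      show symmDiff S {a} = insert a R by grind [mem_symmDiff],
      show symmDiff S {b} = insert b R by grind [mem_symmDiff],
      show S = R by grind, add_comm, h]

section Words

lemma mem_bnd {G : List Bool} {x : ℕ} :
    x ∈ bnd G ↔ x = G.length ∨ (0 < x ∧ x < G.length ∧ G.getD (x - 1) false ≠ G.getD x false) := by
  simp only [bnd, mem_union, mem_filter, mem_Icc, mem_singleton]
  grind

lemma comp_length (G : List Bool) : (comp G).length = G.length :=
  List.length_map _

lemma getD_comp {G : List Bool} {i : ℕ} (h : i < G.length) :
    (comp G).getD i false = !G.getD i false := by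
  rw [List.getD_eq_getElem _ _ (by rwa [comp_length]), List.getD_eq_getElem _ _ h]
  simp [comp]

lemma bnd_comp (G : List Bool) : bnd (comp G) = bnd G := by
  ext x
  simp only [mem_bnd, comp_length]
  refine or_congr_right (and_congr_right fun h₁ => and_congr_right fun h₂ => ?_)
  rw [getD_comp (by omega), getD_comp h₂]
  simp

lemma getD_append_comp_of_lt {E F : List Bool} {i : ℕ} (h : i < E.length) :
    (E ++ comp F).getD i false = (E ++ F).getD i false := by
  rw [List.getD_append _ _ _ _ h, List.getD_append _ _ _ _ h]

lemma getD_append_comp_of_le {E F : List Bool} {i : ℕ} (h₁ : E.length ≤ i)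
    (h₂ : i < E.length + F.length) :
    (E ++ comp F).getD i false = !(E ++ F).getD i false := by
  rw [List.getD_append_right _ _ _ _ h₁, List.getD_append_right _ _ _ _ h₁, getD_comp (by omega)]

lemma bnd_append_comp {E F : List Bool} (hE : E ≠ []) (hF : F ≠ []) :
    bnd (E ++ comp F) = symmDiff (bnd (E ++ F)) {E.length} := by
  have := List.length_pos_iff.2 hE
  have := List.length_pos_iff.2 hF
  ext x
  simp only [mem_symmDiff, mem_bnd, mem_singleton, List.length_append, comp_length]
  by_cases hx : 0 < x ∧ x < E.length + F.length
  swap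
  · grind
  rcases lt_trichotomy x E.length with h | rfl | h
  · rw [getD_append_comp_of_lt h, getD_append_comp_of_lt (by omega)]
    grind
  · rw [getD_append_comp_of_lt (by omega), getD_append_comp_of_le le_rfl hx.2]
    grind
  · rw [getD_append_comp_of_le (by omega) (by omega), getD_append_comp_of_le h.le hx.2]
    grind

lemma chk_append_singleton (e : Bool) : ∀ E : List Bool, chk (E ++ [e]) = E ++ [!e]
  | [] => rfl
  | [_] => rfl
  | b :: c :: E => by
    show b :: chk (c :: E ++ [e]) = _
    rw [chk_append_singleton e (c :: E)]
    rfl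

lemma bnd_append_not_append_comp {E F : List Bool} {e : Bool} (hE : E ≠ []) :
    bnd (E ++ [!e] ++ comp F) = symmDiff (bnd (E ++ [e] ++ F)) {E.length} := by
  rw [show E ++ [!e] ++ comp F = E ++ comp ([e] ++ F) by simp [comp],
    bnd_append_comp hE (by simp), List.append_assoc]

lemma bnd_append_not_append {E F : List Bool} {e : Bool} (hE : E ≠ []) (hF : F ≠ []) :
    bnd (E ++ [!e] ++ F) =
      symmDiff (symmDiff (bnd (E ++ [e] ++ F)) {E.length + 1}) {E.length} := by
  rw [show E ++ [!e] ++ F = E ++ comp ([e] ++ comp F) by simp [comp, Function.comp_def],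
    bnd_append_comp hE (by simp), ← List.append_assoc, bnd_append_comp (by simp) hF]
  simp

end Words

theorem hST_dualBB_general (n : ℕ) (T : List Bool) (hT : T.length = n - 1) :
    DualBB (n - 1) (fun E => hST n T (bnd E)) := by
  intro E F hlen
  rcases eq_or_ne F [] with rfl | hF
  · rfl
  rcases E.eq_nil_or_concat' with rfl | ⟨E, e, rfl⟩
  · simp only [chk, List.nil_append, bnd_comp]
  simp only [chk_append_singleton]
  rcases eq_or_ne E [] with rfl | hE
  · simp only [List.nil_append]
    rw [show [!e] ++ F = comp ([e] ++ comp F) by simp [comp, Function.comp_def],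
      show [!e] ++ comp F = comp ([e] ++ F) by simp [comp], bnd_comp, bnd_comp, add_comm]
  have hE' := List.length_pos_iff.2 hE
  have hF' := List.length_pos_iff.2 hF
  simp only [List.length_append, List.length_singleton] at hlen
  have h₁ : bnd (E ++ [e] ++ comp F) = symmDiff (bnd (E ++ [e] ++ F)) {E.length + 1} := by
    simpa using bnd_append_comp (E := E ++ [e]) (by simp) hF
  rw [bnd_append_not_append hE hF, bnd_append_not_append_comp hE, h₁]
  refine add_apply_symmDiff_symmDiff (by omega) _ ?_
  have hkey := hST_insert_insert_add (n := n) (T := T) (by omega)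
    (S := bnd (E ++ [e] ++ F) \ {E.length + 1, E.length})
    (mem_sdiff.2 ⟨mem_bnd.2 (Or.inl (by simp; omega)), by simp; omega⟩)
    hE' (by omega)
  rwa [insert_comm, add_comm (hST n T (insert E.length _))] at hkey

theorem hST_dualBB (n : ℕ) (hn : 2 ≤ n) (T : List Bool) (hT : T.length = n - 1) :
    DualBB (n - 1) (fun E => hST n T (bnd E)) :=
  hST_dualBB_general n T hT
end

section
/- Let n ∈ ℕ, j ∈ [f_{n+1}], and write P_{n,j} = Σ_M a_M M, the sum over all words M in a, b (with a_M ∈ ℚ and only finitely many a_M nonzero). Then a_M = 0 unless the length of M is at most n and congruent to n modulo 2; moreover, if M has length n − 2i for some i ≥ 0, then (−1)^i a_M ≥ 0. -/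
/-- The free associative `ℚ`-algebra on the two noncommuting generators `a`, `b`. -/
abbrev FreeA := FreeAlgebra ℚ Bool

/-- The generator `a`. -/
noncomputable def gena : FreeA := FreeAlgebra.ι ℚ false

/-- The generator `b`. -/
noncomputable def genb : FreeA := FreeAlgebra.ι ℚ true

/-- `c = a + b`. -/
noncomputable def genc : FreeA := gena + genb

/-- `d = ab + ba`. -/
noncomputable def gend : FreeA := gena * genb + genb * gena

/-- The lists `A_n`: `A_0 = (1)`, `A_1 = (c)`, and `A_n` is the list
`(cP + G'(P) : P ∈ A_{n-1})` followed by the list `((d-1)P : P ∈ A_{n-2})`.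
Its entries are `P_{n,1}, …, P_{n,f_{n+1}}`. -/
noncomputable def Plist (G' : FreeA →ₗ[ℚ] FreeA) : ℕ → List FreeA
  | 0 => [1]
  | 1 => [genc]
  | n + 2 =>
      ((Plist G' (n + 1)).map fun P => genc * P + G' P) ++
        ((Plist G' n).map fun P => (gend - 1) * P)

/-- The identification of `FreeA` with the monoid algebra of the free monoid on two
letters, whose underlying `ℚ`-basis is the set of words in `a`, `b`. -/
noncomputable def wordEquiv : FreeA ≃ₐ[ℚ] MonoidAlgebra ℚ (FreeMonoid Bool) :=
  FreeAlgebra.equivMonoidAlgebraFreeMonoid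

/-- The coordinates of an element of `FreeA` with respect to the basis of words in `a`, `b`. -/
noncomputable def toCoeffs (x : FreeA) : FreeMonoid Bool →₀ ℚ :=
  (wordEquiv x).coeff

/-- `π_n`: the `ℚ`-linear projection of `FreeA` keeping exactly the terms supported on
words of length `n` (the homogeneous component of degree `n`). -/
noncomputable def pin (n : ℕ) (x : FreeA) : FreeA :=
  wordEquiv.symm (MonoidAlgebra.ofCoeff ((toCoeffs x).filter (fun m : FreeMonoid Bool => m.length = n)))

/-! Let `K n` (`alternatingCone`) be the cone of nonnegative combinations of the signed words
`(-1)^i w` with `|w| + 2i = n`; its elements have exactly the support and sign pattern of the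
theorem. These cones are graded, `K j * K k ⊆ K (j + k)`, and contain `1`, `c` and `d - 1` in
degrees `0`, `1`, `2`. By the Leibniz rule, a derivation sending every generator into `K 2` (as
`G' a = ab` and `G' b = ba` do) maps `K n` into `K (n + 1)`. Hence `P ↦ cP + G'(P)` maps `K n`
into `K (n + 1)` and `P ↦ (d - 1)P` maps `K n` into `K (n + 2)`, so every `P_{n,j}` lies
in `K n`. -/

namespace FreeAlgebra

section Word

variable {R X : Type*} [CommSemiring R]

variable (R) in
noncomputable def word : FreeMonoid X →* FreeAlgebra R X := FreeMonoid.lift (ι R)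

lemma word_of (m : X) : word R (FreeMonoid.of m) = ι R m := FreeMonoid.lift_eval_of _ _

lemma equivMonoidAlgebraFreeMonoid_word (M : FreeMonoid X) :
    equivMonoidAlgebraFreeMonoid (word R M) = MonoidAlgebra.of R (FreeMonoid X) M := by
  have : (equivMonoidAlgebraFreeMonoid : FreeAlgebra R X ≃ₐ[R] _).toMonoidHom.comp (word R) =
      MonoidAlgebra.of R _ :=
    FreeMonoid.hom_eq fun x => by simp [word, equivMonoidAlgebraFreeMonoid]
  exact DFunLike.congr_fun this M

end Word

variable {R X : Type*} [CommRing R] [PartialOrder R] [IsOrderedRing R]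

variable (R X) in
noncomputable def alternatingCone (n : ℕ) : PointedCone R (FreeAlgebra R X) :=
  PointedCone.hull R
    {x | ∃ (i : ℕ) (M : FreeMonoid X), M.length + 2 * i = n ∧ (-1 : R) ^ i • word R M = x}

lemma neg_one_pow_smul_word_mem_alternatingCone {i n : ℕ} {M : FreeMonoid X}
    (h : M.length + 2 * i = n) : (-1 : R) ^ i • word R M ∈ alternatingCone R X n :=
  Submodule.subset_span ⟨i, M, h, rfl⟩

lemma word_mem_alternatingCone (M : FreeMonoid X) :
    word R M ∈ alternatingCone R X M.length := by
  simpa using neg_one_pow_smul_word_mem_alternatingCone (R := R) (i := 0) (M := M) rfl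

lemma one_mem_alternatingCone : (1 : FreeAlgebra R X) ∈ alternatingCone R X 0 := by
  simpa using word_mem_alternatingCone (R := R) (1 : FreeMonoid X)

lemma ι_mem_alternatingCone (m : X) : ι R m ∈ alternatingCone R X 1 := by
  simpa [word_of] using word_mem_alternatingCone (R := R) (FreeMonoid.of m)

lemma neg_one_mem_alternatingCone : (-1 : FreeAlgebra R X) ∈ alternatingCone R X 2 := by
  simpa using neg_one_pow_smul_word_mem_alternatingCone (R := R) (i := 1) (M := (1 : FreeMonoid X))
    rfl

lemma mul_mem_alternatingCone {j k : ℕ} {x y : FreeAlgebra R X}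
    (hx : x ∈ alternatingCone R X j) (hy : y ∈ alternatingCone R X k) :
    x * y ∈ alternatingCone R X (j + k) := by
  induction hx using Submodule.span_induction with
  | mem x hx =>
    obtain ⟨i, M, rfl, rfl⟩ := hx
    induction hy using Submodule.span_induction with
    | mem y hy =>
      obtain ⟨i', M', rfl, rfl⟩ := hy
      rw [smul_mul_smul_comm, ← pow_add, ← map_mul]
      exact neg_one_pow_smul_word_mem_alternatingCone (by simp; ring)
    | zero => simp
    | add y y' _ _ hy hy' => rw [mul_add]; exact add_mem hy hy'
    | smul r y _ hy =>
      rw [← Nonneg.coe_smul, mul_smul_comm, Nonneg.coe_smul]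
      exact Submodule.smul_mem _ r hy
  | zero => simp
  | add x x' _ _ hx hx' => rw [add_mul]; exact add_mem hx hx'
  | smul r x _ hx =>
    rw [← Nonneg.coe_smul, smul_mul_assoc, Nonneg.coe_smul]
    exact Submodule.smul_mem _ r hx

lemma neg_one_pow_smul_mem_alternatingCone {n : ℕ} {x : FreeAlgebra R X} (i : ℕ)
    (hx : x ∈ alternatingCone R X n) :
    (-1 : R) ^ i • x ∈ alternatingCone R X (2 * i + n) := by
  have hsign : (-1 : R) ^ i • (1 : FreeAlgebra R X) ∈ alternatingCone R X (2 * i) := by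
    simpa using neg_one_pow_smul_word_mem_alternatingCone (R := R) (M := (1 : FreeMonoid X))
      (zero_add _)
  simpa using mul_mem_alternatingCone hsign hx

lemma map_mem_alternatingCone_of_leibniz (D : FreeAlgebra R X →ₗ[R] FreeAlgebra R X)
    (hD : ∀ x y, D (x * y) = D x * y + x * D y)
    (hι : ∀ m, D (ι R m) ∈ alternatingCone R X 2)
    {n : ℕ} {x : FreeAlgebra R X} (hx : x ∈ alternatingCone R X n) :
    D x ∈ alternatingCone R X (n + 1) := by
  have hword (M : FreeMonoid X) : D (word R M) ∈ alternatingCone R X (M.length + 1) := by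
    induction M using FreeMonoid.inductionOn' with
    | one =>
      have : D 1 = 0 := by simpa using hD 1 1
      simp [this]
    | of_mul m M ih =>
      rw [map_mul, word_of, hD, FreeMonoid.length_mul, FreeMonoid.length_of,
        show 1 + M.length + 1 = 2 + M.length by omega]
      refine add_mem (mul_mem_alternatingCone (hι m) (word_mem_alternatingCone M)) ?_
      convert mul_mem_alternatingCone (ι_mem_alternatingCone m) ih using 2
      omega
  induction hx using Submodule.span_induction with
  | mem x hx =>
    obtain ⟨i, M, rfl, rfl⟩ := hx
    rw [map_smul]
    convert neg_one_pow_smul_mem_alternatingCone i (hword M) using 2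
    omega
  | zero => simp
  | add x x' _ _ hx hx' => rw [map_add]; exact add_mem hx hx'
  | smul r x _ hx =>
    rw [← Nonneg.coe_smul, map_smul, Nonneg.coe_smul]
    exact Submodule.smul_mem _ r hx

lemma coeff_of_mem_alternatingCone {n : ℕ} {x : FreeAlgebra R X}
    (hx : x ∈ alternatingCone R X n) (M : FreeMonoid X) :
    ((equivMonoidAlgebraFreeMonoid x).coeff M ≠ 0 → ∃ i, M.length + 2 * i = n) ∧
      ∀ i, M.length + 2 * i = n →
        0 ≤ (-1 : R) ^ i * (equivMonoidAlgebraFreeMonoid x).coeff M := by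
  induction hx using Submodule.span_induction with
  | mem x hx =>
    obtain ⟨i, M', rfl, rfl⟩ := hx
    simp only [map_smul, equivMonoidAlgebraFreeMonoid_word, MonoidAlgebra.coeff_smul_apply,
      MonoidAlgebra.of_apply, MonoidAlgebra.coeff_single, smul_eq_mul]
    by_cases hM : M' = M
    · subst hM
      refine ⟨fun _ => ⟨i, rfl⟩, fun i' hi' => ?_⟩
      obtain rfl : i' = i := by omega
      simp [← pow_add, ← two_mul, pow_mul]
    · simp [Finsupp.single_eq_of_ne' hM]
  | zero => simp
  | add x y _ _ hx hy =>
    simp only [map_add, MonoidAlgebra.coeff_add, Finsupp.add_apply, mul_add]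
    refine ⟨fun hxy => ?_, fun i hi => add_nonneg (hx.2 i hi) (hy.2 i hi)⟩
    by_cases hx0 : (equivMonoidAlgebraFreeMonoid x).coeff M = 0
    · exact hy.1 (by simpa [hx0] using hxy)
    · exact hx.1 hx0
  | smul r x _ hx =>
    rw [← Nonneg.coe_smul]
    simp only [map_smul, MonoidAlgebra.coeff_smul_apply, smul_eq_mul]
    refine ⟨fun h => hx.1 (right_ne_zero_of_mul h), fun i hi => ?_⟩
    rw [mul_left_comm]
    exact mul_nonneg r.2 (hx.2 i hi)

end FreeAlgebra

open FreeAlgebra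

lemma gena_mem_alternatingCone : gena ∈ alternatingCone ℚ Bool 1 :=
  ι_mem_alternatingCone false

lemma genb_mem_alternatingCone : genb ∈ alternatingCone ℚ Bool 1 :=
  ι_mem_alternatingCone true

lemma genc_mem_alternatingCone : genc ∈ alternatingCone ℚ Bool 1 :=
  add_mem gena_mem_alternatingCone genb_mem_alternatingCone

lemma gena_mul_genb_mem_alternatingCone : gena * genb ∈ alternatingCone ℚ Bool 2 :=
  mul_mem_alternatingCone (j := 1) (k := 1) gena_mem_alternatingCone genb_mem_alternatingCone

lemma genb_mul_gena_mem_alternatingCone : genb * gena ∈ alternatingCone ℚ Bool 2 :=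
  mul_mem_alternatingCone (j := 1) (k := 1) genb_mem_alternatingCone gena_mem_alternatingCone

lemma gend_sub_one_mem_alternatingCone : gend - 1 ∈ alternatingCone ℚ Bool 2 := by
  rw [gend, sub_eq_add_neg]
  exact add_mem (add_mem gena_mul_genb_mem_alternatingCone genb_mul_gena_mem_alternatingCone)
    neg_one_mem_alternatingCone

lemma map_ι_mem_alternatingCone (G' : FreeA →ₗ[ℚ] FreeA)
    (ha : G' gena = gena * genb) (hb : G' genb = genb * gena) :
    ∀ m, G' (ι ℚ m) ∈ alternatingCone ℚ Bool 2
  | false => by rw [← gena, ha]; exact gena_mul_genb_mem_alternatingCone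
  | true => by rw [← genb, hb]; exact genb_mul_gena_mem_alternatingCone

lemma mem_alternatingCone_of_mem_Plist (G' : FreeA →ₗ[ℚ] FreeA)
    (hG' : ∀ n, ∀ x ∈ alternatingCone ℚ Bool n, G' x ∈ alternatingCone ℚ Bool (n + 1))
    (n : ℕ) : ∀ P ∈ Plist G' n, P ∈ alternatingCone ℚ Bool n := by
  induction n using Plist.induct with
  | case1 => simpa [Plist] using one_mem_alternatingCone
  | case2 => simpa [Plist] using genc_mem_alternatingCone
  | case3 n ih₁ ih₀ =>
    simp only [Plist, List.mem_append, List.mem_map]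
    rintro P (⟨Q, hQ, rfl⟩ | ⟨Q, hQ, rfl⟩)
    · have hcQ := mul_mem_alternatingCone genc_mem_alternatingCone (ih₁ Q hQ)
      rw [add_comm 1] at hcQ
      exact add_mem hcQ (hG' _ Q (ih₁ Q hQ))
    · have hdQ := mul_mem_alternatingCone gend_sub_one_mem_alternatingCone (ih₀ Q hQ)
      rwa [add_comm 2] at hdQ

theorem Plist_coeff_support_and_signs
    (G' : FreeA →ₗ[ℚ] FreeA)
    (hLeib : ∀ x y : FreeA, G' (x * y) = G' x * y + x * G' y)
    (ha : G' gena = gena * genb) (hb : G' genb = genb * gena)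
    (n : ℕ) (j : Fin (Plist G' n).length) (M : FreeMonoid Bool) :
    (toCoeffs ((Plist G' n).get j) M ≠ 0 →
        M.length ≤ n ∧ M.length % 2 = n % 2) ∧
      ∀ i : ℕ, M.length + 2 * i = n →
        0 ≤ (-1 : ℚ) ^ i * toCoeffs ((Plist G' n).get j) M := by
  have hG' (k : ℕ) (x : FreeA) (hx : x ∈ alternatingCone ℚ Bool k) :
      G' x ∈ alternatingCone ℚ Bool (k + 1) :=
    map_mem_alternatingCone_of_leibniz G' hLeib (map_ι_mem_alternatingCone G' ha hb) hx
  have hP := mem_alternatingCone_of_mem_Plist G' hG' n _ (List.get_mem _ j)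
  obtain ⟨hsupport, hsign⟩ := coeff_of_mem_alternatingCone hP M
  refine ⟨fun hM => ?_, hsign⟩
  obtain ⟨i, hi⟩ := hsupport hM
  omega
end
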